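/- Let (X,Y) be uniformly distributed on the triangle with vertices (0,0), (1/2,1), and (1,0). Then for every α ∈ (0,1), the dichotomized AUC satisfies AUC^(α)(X,Y) = 1/2, and consequently Spearman's rho ρ_S = 12 Cov(F(X), G(Y)) = 0. -/

import Mathlib

open MeasureTheory ProbabilityTheory

noncomputable section

variable {Ω : Type*} [MeasurableSpace Ω]

/-- Mid distribution function of `X` under `μ`: `F̄(x) = P(X < x) + (1/2) P(X = x)`. -/
def mdf (μ : Measure Ω) (X : Ω → ℝ) (x : ℝ) : ℝ :=
  (μ {ω | X ω < x}).toReal + (1 / 2) * (μ {ω | X ω = x}).toReal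

/-- Covariance of two real random variables under `μ`. -/
def covar (μ : Measure Ω) (f g : Ω → ℝ) : ℝ :=
  (∫ ω, f ω * g ω ∂μ) - (∫ ω, f ω ∂μ) * (∫ ω, g ω ∂μ)

/-- Similarity function `s(a,b) = 1{a < b} + (1/2) 1{a = b}`. -/
def simFun (a b : ℝ) : ℝ :=
  (if a < b then 1 else 0) + (1 / 2) * (if a = b then 1 else 0)

/-- Granularity `γ(X) = P(X = X' = X'')` for i.i.d. copies of `X`. -/
def gran (μ : Measure Ω) (X : Ω → ℝ) : ℝ :=
  ((μ.prod (μ.prod μ)) {ω | X ω.1 = X ω.2.1 ∧ X ω.2.1 = X ω.2.2}).toReal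

/-- Asymmetric grade correlation `AGC(U,V) = Cov(F̄_U(U), Ḡ_V(V)) / Var(Ḡ_V(V))`. -/
def agc (μ : Measure Ω) (U V : Ω → ℝ) : ℝ :=
  covar μ (fun ω => mdf μ U (U ω)) (fun ω => mdf μ V (V ω)) /
    covar μ (fun ω => mdf μ V (V ω)) (fun ω => mdf μ V (V ω))

/-- Coefficient of monotone association `CMA(U,V) = (AGC(U,V) + 1) / 2`. -/
def cma (μ : Measure Ω) (U V : Ω → ℝ) : ℝ := (agc μ U V + 1) / 2

/-- `X` is not almost surely constant. -/
def Nondeg (μ : Measure Ω) (X : Ω → ℝ) : Prop := ¬ ∃ c : ℝ, X =ᵐ[μ] fun _ => c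

/-- Pearson correlation. -/
def pcor (μ : Measure Ω) (f g : Ω → ℝ) : ℝ :=
  covar μ f g / (Real.sqrt (covar μ f f) * Real.sqrt (covar μ g g))

/-- Quantile function (generalized inverse of the CDF). -/
def qf (μ : Measure Ω) (Y : Ω → ℝ) (α : ℝ) : ℝ :=
  sInf {y : ℝ | α ≤ (μ {ω | Y ω ≤ y}).toReal}

/-- The triangle with vertices `(0,0)`, `(1/2,1)`, `(1,0)`. -/
def triT : Set (ℝ × ℝ) := {p | 0 ≤ p.2 ∧ p.2 ≤ 2 * p.1 ∧ p.2 ≤ 2 * (1 - p.1)}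

lemma isClosed_triT : IsClosed triT := by
  have h : triT = {p : ℝ × ℝ | 0 ≤ p.2} ∩ ({p | p.2 ≤ 2 * p.1} ∩ {p | p.2 ≤ 2 * (1 - p.1)}) := by
    ext p; simp [triT, and_assoc]
  rw [h]
  exact (isClosed_le continuous_const continuous_snd).inter
    ((isClosed_le continuous_snd (by fun_prop)).inter
      (isClosed_le continuous_snd (by fun_prop)))

lemma measurableSet_triT : MeasurableSet triT := isClosed_triT.measurableSet

/-- the reflection `(x, y) ↦ (1 - x, y)` -/
def refl2 : ℝ × ℝ → ℝ × ℝ := fun p => (1 - p.1, p.2)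

lemma measurable_refl2 : Measurable refl2 := by unfold refl2; fun_prop

lemma refl2_preimage_triT : refl2 ⁻¹' triT = triT := by
  ext p
  simp only [Set.mem_preimage, triT, Set.mem_setOf_eq, refl2]
  constructor <;> rintro ⟨h1, h2, h3⟩ <;> exact ⟨h1, by linarith, by linarith⟩

lemma volume_map_refl2 : (volume : Measure (ℝ × ℝ)).map refl2 = volume := by
  have h1 : MeasurePreserving (fun x : ℝ => 1 - x) volume volume :=
    Measure.measurePreserving_sub_left volume 1
  have h2 := h1.prod (MeasurePreserving.id (volume : Measure ℝ))
  have heq : Prod.map (fun x : ℝ => 1 - x) id = refl2 := by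
    funext p; rfl
  rw [Measure.volume_eq_prod, ← heq]
  exact h2.map_eq

lemma triT_map_refl2 : (volume.restrict triT).map refl2 = volume.restrict triT := by
  calc (volume.restrict triT).map refl2
      = (volume.restrict (refl2 ⁻¹' triT)).map refl2 := by rw [refl2_preimage_triT]
    _ = ((volume : Measure (ℝ × ℝ)).map refl2).restrict triT :=
        (Measure.restrict_map measurable_refl2 measurableSet_triT).symm
    _ = volume.restrict triT := by rw [volume_map_refl2]

lemma vol_vert (c : ℝ) : (volume : Measure (ℝ × ℝ)) {p : ℝ × ℝ | p.1 = c} = 0 := by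
  have h : {p : ℝ × ℝ | p.1 = c} = ({c} : Set ℝ) ×ˢ (Set.univ : Set ℝ) := by
    ext p
    constructor
    · intro hp; exact ⟨hp, Set.mem_univ _⟩
    · intro hp; exact hp.1
  rw [h, Measure.volume_eq_prod, Measure.prod_prod]
  simp

lemma vol_horiz (c : ℝ) : (volume : Measure (ℝ × ℝ)) {p : ℝ × ℝ | p.2 = c} = 0 := by
  have h : {p : ℝ × ℝ | p.2 = c} = (Set.univ : Set ℝ) ×ˢ ({c} : Set ℝ) := by
    ext p
    constructor
    · intro hp; exact ⟨Set.mem_univ _, hp⟩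
    · intro hp; exact hp.2
  rw [h, Measure.volume_eq_prod, Measure.prod_prod]
  simp

/-- for `(X,Y)` uniform on the triangle, `AUC^(α)(X,Y) = 1/2` for all
`α ∈ (0,1)`, and Spearman's rho `ρ_S = 12 Cov(F(X), G(Y)) = 0`. -/
theorem stmt_16 (μ : Measure Ω) [IsProbabilityMeasure μ] (X Y : Ω → ℝ)
    (hX : Measurable X) (hY : Measurable Y)
    (hlaw : μ.map (fun ω => (X ω, Y ω)) = (2 : ENNReal) • (volume.restrict triT)) :
    (∀ α ∈ Set.Ioo (0 : ℝ) 1,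
      ((μ.prod μ) {p : Ω × Ω | X p.1 < X p.2 ∧ Y p.1 < qf μ Y α ∧ qf μ Y α ≤ Y p.2}).toReal
        / ((μ.prod μ) {p : Ω × Ω | Y p.1 < qf μ Y α ∧ qf μ Y α ≤ Y p.2}).toReal = 1 / 2) ∧
    12 * covar μ (fun ω => (μ {ω' | X ω' ≤ X ω}).toReal)
      (fun ω => (μ {ω' | Y ω' ≤ Y ω}).toReal) = 0 := by
  have hZ : Measurable (fun ω => (X ω, Y ω)) := hX.prodMk hY
  set ν : Measure (ℝ × ℝ) := μ.map (fun ω => (X ω, Y ω)) with hν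
  have hZpres : MeasurePreserving (fun ω => (X ω, Y ω)) μ ν := ⟨hZ, rfl⟩
  have hνprob : IsProbabilityMeasure ν := Measure.isProbabilityMeasure_map hZ.aemeasurable
  have hSν : ν.map refl2 = ν := by
    rw [hlaw, Measure.map_smul, triT_map_refl2]
  have hSpres : MeasurePreserving refl2 ν ν := ⟨measurable_refl2, hSν⟩
  -- Lebesgue-null sets are ν-null
  have hsmall : ∀ s : Set (ℝ × ℝ), (volume : Measure (ℝ × ℝ)) s = 0 → ν s = 0 := by
    intro s hs
    rw [hlaw]
    simp only [Measure.smul_apply, smul_eq_mul]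
    have h1 : volume.restrict triT s ≤ volume s := Measure.restrict_le_self s
    rw [hs] at h1
    rw [le_zero_iff.mp h1, mul_zero]
  have hvert : ∀ c : ℝ, ν {p : ℝ × ℝ | p.1 = c} = 0 := fun c => hsmall _ (vol_vert c)
  have hhoriz : ∀ c : ℝ, ν {p : ℝ × ℝ | p.2 = c} = 0 := fun c => hsmall _ (vol_horiz c)
  -- transfers
  have hYle : ∀ c : ℝ, μ {ω | Y ω ≤ c} = ν {p : ℝ × ℝ | p.2 ≤ c} := fun c => by
    rw [hν, Measure.map_apply hZ (measurableSet_le measurable_snd measurable_const)]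
    rfl
  have hXle : ∀ c : ℝ, μ {ω | X ω ≤ c} = ν {p : ℝ × ℝ | p.1 ≤ c} := fun c => by
    rw [hν, Measure.map_apply hZ (measurableSet_le measurable_fst measurable_const)]
    rfl
  have hYeq : ∀ c : ℝ, μ {ω | Y ω = c} = 0 := fun c => by
    have h : μ {ω | Y ω = c} = ν {p : ℝ × ℝ | p.2 = c} := by
      rw [hν, Measure.map_apply hZ (measurableSet_eq_fun measurable_snd measurable_const)]
      rfl
    rw [h]; exact hhoriz c
  -- triangle support facts
  have hYneg : ∀ c : ℝ, c < 0 → μ {ω | Y ω ≤ c} = 0 := by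
    intro c hc
    rw [hYle, hlaw]
    simp only [Measure.smul_apply, smul_eq_mul]
    rw [Measure.restrict_apply' measurableSet_triT]
    have h : {p : ℝ × ℝ | p.2 ≤ c} ∩ triT = ∅ := by
      refine Set.eq_empty_iff_forall_notMem.mpr fun p hp => ?_
      have h1 : p.2 ≤ c := hp.1
      have h2 : 0 ≤ p.2 := hp.2.1
      linarith
    rw [h]
    simp
  have hYone : μ {ω | Y ω ≤ 1} = 1 := by
    have hc : {ω | Y ω ≤ 1} = {ω | 1 < Y ω}ᶜ := by
      ext ω; simp [not_lt]
    have h0 : μ {ω | 1 < Y ω} = 0 := by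
      have h : μ {ω | 1 < Y ω} = ν {p : ℝ × ℝ | 1 < p.2} := by
        rw [hν, Measure.map_apply hZ (measurableSet_lt measurable_const measurable_snd)]
        rfl
      rw [h, hlaw]
      simp only [Measure.smul_apply, smul_eq_mul]
      rw [Measure.restrict_apply' measurableSet_triT]
      have h2 : {p : ℝ × ℝ | 1 < p.2} ∩ triT = ∅ := by
        refine Set.eq_empty_iff_forall_notMem.mpr fun p hp => ?_
        have h1 : 1 < p.2 := hp.1
        have h3 : p.2 ≤ 2 * p.1 := hp.2.2.1
        have h4 : p.2 ≤ 2 * (1 - p.1) := hp.2.2.2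
        linarith
      rw [h2]
      simp
    rw [hc, prob_compl_eq_one_sub (measurableSet_lt measurable_const hY), h0, tsub_zero]
  have hg_mono : Monotone (fun y => (μ {ω | Y ω ≤ y}).toReal) := by
    intro a b hab
    exact ENNReal.toReal_mono (measure_ne_top μ _)
      (measure_mono (fun ω h => le_trans h hab))
  constructor
  · -- Part 1: the dichotomized AUC
    rintro α ⟨hα0, hα1⟩
    set q := qf μ Y α with hq
    set Sα : Set ℝ := {y : ℝ | α ≤ (μ {ω | Y ω ≤ y}).toReal} with hSα
    have hqS : q = sInf Sα := rfl
    have hS_ne : (1 : ℝ) ∈ Sα := by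
      simp only [hSα, Set.mem_setOf_eq, hYone]
      simpa using hα1.le
    have hS_lb : ∀ y ∈ Sα, (0 : ℝ) ≤ y := by
      intro y hy
      by_contra hneg
      push_neg at hneg
      have h0 := hYneg y hneg
      simp only [hSα, Set.mem_setOf_eq, h0, ENNReal.toReal_zero] at hy
      linarith
    have hS_bdd : BddBelow Sα := ⟨0, hS_lb⟩
    -- μ {Y ≤ q} ≥ α
    have hq_upper : ENNReal.ofReal α ≤ μ {ω | Y ω ≤ q} := by
      have hseq : ∀ n : ℕ, ENNReal.ofReal α ≤ μ {ω | Y ω ≤ q + 1 / ((n : ℝ) + 1)} := by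
        intro n
        have hpos : (0 : ℝ) < 1 / ((n : ℝ) + 1) := by positivity
        have hlt : sInf Sα < q + 1 / ((n : ℝ) + 1) := by rw [← hqS]; linarith
        obtain ⟨y, hyS, hylt⟩ := (csInf_lt_iff hS_bdd ⟨1, hS_ne⟩).mp hlt
        have h1 : α ≤ (μ {ω | Y ω ≤ q + 1 / ((n : ℝ) + 1)}).toReal :=
          le_trans hyS (hg_mono hylt.le)
        exact ENNReal.ofReal_le_of_le_toReal h1
      have hinter : ⋂ n : ℕ, {ω | Y ω ≤ q + 1 / ((n : ℝ) + 1)} = {ω | Y ω ≤ q} := by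
        ext ω
        simp only [Set.mem_iInter, Set.mem_setOf_eq]
        constructor
        · intro h
          by_contra hlt
          push_neg at hlt
          obtain ⟨n, hn⟩ := exists_nat_one_div_lt (sub_pos.mpr hlt)
          have h2 := h n
          linarith
        · intro h n
          have hpos : (0 : ℝ) < 1 / ((n : ℝ) + 1) := by positivity
          linarith
      have hanti : Antitone (fun n : ℕ => {ω | Y ω ≤ q + 1 / ((n : ℝ) + 1)}) := by
        intro n m hnm ω hω
        simp only [Set.mem_setOf_eq] at hω ⊢
        have h1 : (1 : ℝ) / ((m : ℝ) + 1) ≤ 1 / ((n : ℝ) + 1) := by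
          apply one_div_le_one_div_of_le (by positivity)
          have := (Nat.cast_le (α := ℝ)).mpr hnm; linarith
        linarith
      have htend := tendsto_measure_iInter_atTop (μ := μ)
        (s := fun n : ℕ => {ω | Y ω ≤ q + 1 / ((n : ℝ) + 1)})
        (fun n => (hY measurableSet_Iic).nullMeasurableSet) hanti ⟨0, measure_ne_top μ _⟩
      rw [hinter] at htend
      exact ge_of_tendsto' htend hseq
    -- μ {Y < q} ≤ α
    have hq_lower : μ {ω | Y ω < q} ≤ ENNReal.ofReal α := by
      have hcover : {ω | Y ω < q} = ⋃ n : ℕ, {ω | Y ω ≤ q - 1 / ((n : ℝ) + 1)} := by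
        ext ω
        simp only [Set.mem_iUnion, Set.mem_setOf_eq]
        constructor
        · intro h
          obtain ⟨n, hn⟩ := exists_nat_one_div_lt (sub_pos.mpr h)
          exact ⟨n, by linarith⟩
        · rintro ⟨n, hn⟩
          have hpos : (0 : ℝ) < 1 / ((n : ℝ) + 1) := by positivity
          linarith
      have hmono : Monotone (fun n : ℕ => {ω | Y ω ≤ q - 1 / ((n : ℝ) + 1)}) := by
        intro n m hnm ω hω
        simp only [Set.mem_setOf_eq] at hω ⊢
        have h1 : (1 : ℝ) / ((m : ℝ) + 1) ≤ 1 / ((n : ℝ) + 1) := by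
          apply one_div_le_one_div_of_le (by positivity)
          have := (Nat.cast_le (α := ℝ)).mpr hnm; linarith
        linarith
      rw [hcover, hmono.measure_iUnion]
      refine iSup_le fun n => ?_
      have hlt : q - 1 / ((n : ℝ) + 1) < q := by
        have hpos : (0 : ℝ) < 1 / ((n : ℝ) + 1) := by positivity
        linarith
      have hnot : q - 1 / ((n : ℝ) + 1) ∉ Sα := by
        intro hmem
        have h1 : sInf Sα ≤ q - 1 / ((n : ℝ) + 1) := csInf_le hS_bdd hmem
        rw [← hqS] at h1
        linarith
      have hle : (μ {ω | Y ω ≤ q - 1 / ((n : ℝ) + 1)}).toReal ≤ α := by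
        simp only [hSα, Set.mem_setOf_eq, not_le] at hnot
        exact hnot.le
      calc μ {ω | Y ω ≤ q - 1 / ((n : ℝ) + 1)}
          = ENNReal.ofReal ((μ {ω | Y ω ≤ q - 1 / ((n : ℝ) + 1)}).toReal) :=
            (ENNReal.ofReal_toReal (measure_ne_top μ _)).symm
        _ ≤ ENNReal.ofReal α := ENNReal.ofReal_le_ofReal hle
    have hsplit : μ {ω | Y ω ≤ q} ≤ μ {ω | Y ω < q} + μ {ω | Y ω = q} := by
      refine le_trans (measure_mono ?_) (measure_union_le _ _)
      intro ω h
      have h' : Y ω ≤ q := h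
      show Y ω < q ∨ Y ω = q
      exact lt_or_eq_of_le h'
    have hlt_eq : μ {ω | Y ω < q} = ENNReal.ofReal α := by
      refine le_antisymm hq_lower ?_
      calc ENNReal.ofReal α ≤ μ {ω | Y ω ≤ q} := hq_upper
        _ ≤ μ {ω | Y ω < q} + μ {ω | Y ω = q} := hsplit
        _ = μ {ω | Y ω < q} := by rw [hYeq q, add_zero]
    have hge_eq : μ {ω | q ≤ Y ω} = ENNReal.ofReal (1 - α) := by
      have hc : {ω | q ≤ Y ω} = {ω | Y ω < q}ᶜ := by
        ext ω; simp [not_lt]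
      rw [hc, prob_compl_eq_one_sub (show MeasurableSet {ω | Y ω < q} from hY measurableSet_Iio),
        hlt_eq,
        ← ENNReal.ofReal_one, ← ENNReal.ofReal_sub 1 hα0.le]
    have hrect : {p : Ω × Ω | Y p.1 < q ∧ q ≤ Y p.2} = {ω | Y ω < q} ×ˢ {ω | q ≤ Y ω} := rfl
    have hD : (μ.prod μ) {p : Ω × Ω | Y p.1 < q ∧ q ≤ Y p.2}
        = ENNReal.ofReal α * ENNReal.ofReal (1 - α) := by
      rw [hrect, Measure.prod_prod, hlt_eq, hge_eq]
    -- transport the numerator to ν.prod ν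
    have hZZ : MeasurePreserving (Prod.map (fun ω => (X ω, Y ω)) (fun ω => (X ω, Y ω)))
        (μ.prod μ) (ν.prod ν) := hZpres.prod hZpres
    set A : Set ((ℝ × ℝ) × ℝ × ℝ) := {r | r.1.1 < r.2.1 ∧ r.1.2 < q ∧ q ≤ r.2.2} with hA
    set A' : Set ((ℝ × ℝ) × ℝ × ℝ) := {r | r.2.1 < r.1.1 ∧ r.1.2 < q ∧ q ≤ r.2.2} with hA'
    set R : Set ((ℝ × ℝ) × ℝ × ℝ) := {r | r.1.2 < q ∧ q ≤ r.2.2} with hR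
    have hAmeas : MeasurableSet A :=
      (measurableSet_lt (measurable_fst.fst) (measurable_snd.fst)).inter
        ((measurableSet_lt (measurable_fst.snd) measurable_const).inter
          (measurableSet_le measurable_const (measurable_snd.snd)))
    have hA'meas : MeasurableSet A' :=
      (measurableSet_lt (measurable_snd.fst) (measurable_fst.fst)).inter
        ((measurableSet_lt (measurable_fst.snd) measurable_const).inter
          (measurableSet_le measurable_const (measurable_snd.snd)))
    have hRmeas : MeasurableSet R :=
      (measurableSet_lt (measurable_fst.snd) measurable_const).inter
        (measurableSet_le measurable_const (measurable_snd.snd))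
    have hNA : (μ.prod μ) {p : Ω × Ω | X p.1 < X p.2 ∧ Y p.1 < q ∧ q ≤ Y p.2}
        = (ν.prod ν) A := by
      rw [← hZZ.measure_preimage hAmeas.nullMeasurableSet]
      rfl
    have hDR : (μ.prod μ) {p : Ω × Ω | Y p.1 < q ∧ q ≤ Y p.2} = (ν.prod ν) R := by
      rw [← hZZ.measure_preimage hRmeas.nullMeasurableSet]
      rfl
    have hA'A : (ν.prod ν) A' = (ν.prod ν) A := by
      have hpre : (Prod.map refl2 refl2) ⁻¹' A = A' := by
        ext r
        simp only [hA, hA', Set.mem_preimage, Set.mem_setOf_eq, Prod.map, refl2]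
        constructor <;> rintro ⟨h1, h2, h3⟩ <;> exact ⟨by linarith, h2, h3⟩
      rw [← hpre]
      exact (hSpres.prod hSpres).measure_preimage hAmeas.nullMeasurableSet
    have hdiag : (ν.prod ν) {r : (ℝ × ℝ) × ℝ × ℝ | r.1.1 = r.2.1} = 0 := by
      rw [Measure.prod_apply (measurableSet_eq_fun (measurable_fst.fst) (measurable_snd.fst))]
      have h0 : ∀ p : ℝ × ℝ, ν (Prod.mk p ⁻¹' {r : (ℝ × ℝ) × ℝ × ℝ | r.1.1 = r.2.1}) = 0 := by
        intro p
        have h1 : Prod.mk p ⁻¹' {r : (ℝ × ℝ) × ℝ × ℝ | r.1.1 = r.2.1}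
            = {p' : ℝ × ℝ | p'.1 = p.1} := by
          ext p'
          simp only [Set.mem_preimage, Set.mem_setOf_eq]
          exact eq_comm
        rw [h1]
        exact hvert p.1
      simp only [h0]
      simp
    have hRsub : R ⊆ (A ∪ A') ∪ {r : (ℝ × ℝ) × ℝ × ℝ | r.1.1 = r.2.1} := by
      rintro r ⟨h1, h2⟩
      rcases lt_trichotomy r.1.1 r.2.1 with h | h | h
      · exact Or.inl (Or.inl ⟨h, h1, h2⟩)
      · exact Or.inr h
      · exact Or.inl (Or.inr ⟨h, h1, h2⟩)
    have hdisj : Disjoint A A' := by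
      rw [Set.disjoint_left]
      rintro r ⟨h1, -, -⟩ ⟨h2, -, -⟩
      exact absurd h2 (lt_asymm h1)
    have hRA : (ν.prod ν) R = (ν.prod ν) A + (ν.prod ν) A' := by
      refine le_antisymm ?_ ?_
      · calc (ν.prod ν) R ≤ (ν.prod ν) ((A ∪ A') ∪ {r : (ℝ × ℝ) × ℝ × ℝ | r.1.1 = r.2.1}) :=
            measure_mono hRsub
          _ ≤ (ν.prod ν) (A ∪ A') + (ν.prod ν) {r : (ℝ × ℝ) × ℝ × ℝ | r.1.1 = r.2.1} :=
            measure_union_le _ _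
          _ = (ν.prod ν) (A ∪ A') := by rw [hdiag, add_zero]
          _ ≤ (ν.prod ν) A + (ν.prod ν) A' := measure_union_le _ _
      · rw [← measure_union hdisj hA'meas]
        exact measure_mono (Set.union_subset (fun r hr => ⟨hr.2.1, hr.2.2⟩)
          (fun r hr => ⟨hr.2.1, hr.2.2⟩))
    have hRval : (ν.prod ν) R = ENNReal.ofReal α * ENNReal.ofReal (1 - α) := by
      rw [← hDR, hD]
    have hNval : ((ν.prod ν) A).toReal = α * (1 - α) / 2 := by
      have hsum := hRA
      rw [hA'A, hRval] at hsum
      have hfin : (ν.prod ν) A ≠ ⊤ := measure_ne_top _ _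
      have h2 := congrArg ENNReal.toReal hsum.symm
      rw [ENNReal.toReal_add hfin hfin, ENNReal.toReal_mul, ENNReal.toReal_ofReal hα0.le,
        ENNReal.toReal_ofReal (by linarith)] at h2
      linarith
    have hDto : ((μ.prod μ) {p : Ω × Ω | Y p.1 < q ∧ q ≤ Y p.2}).toReal = α * (1 - α) := by
      rw [hD, ENNReal.toReal_mul, ENNReal.toReal_ofReal hα0.le,
        ENNReal.toReal_ofReal (by linarith)]
    rw [hNA, hNval, hDto]
    have hpos : 0 < α * (1 - α) := by nlinarith
    field_simp
  · -- Part 2: Spearman's rho is zero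
    set F : ℝ → ℝ := fun x => (μ {ω' | X ω' ≤ x}).toReal with hF
    set G : ℝ → ℝ := fun y => (μ {ω' | Y ω' ≤ y}).toReal with hG
    have hFmono : Monotone F := by
      intro a b hab
      exact ENNReal.toReal_mono (measure_ne_top μ _)
        (measure_mono (fun ω h => le_trans h hab))
    have hGmono : Monotone G := hg_mono
    have hFmeas : Measurable F := hFmono.measurable
    have hGmeas : Measurable G := hGmono.measurable
    have hF0 : ∀ x, 0 ≤ F x := fun x => ENNReal.toReal_nonneg
    have hG0 : ∀ x, 0 ≤ G x := fun x => ENNReal.toReal_nonneg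
    have hF1 : ∀ x, F x ≤ 1 := by
      intro x
      calc F x ≤ (μ Set.univ).toReal :=
          ENNReal.toReal_mono (measure_ne_top μ _) (measure_mono (Set.subset_univ _))
        _ = 1 := by simp
    have hG1 : ∀ x, G x ≤ 1 := by
      intro x
      calc G x ≤ (μ Set.univ).toReal :=
          ENNReal.toReal_mono (measure_ne_top μ _) (measure_mono (Set.subset_univ _))
        _ = 1 := by simp
    have hFsym : ∀ x : ℝ, F (1 - x) = 1 - F x := by
      intro x
      have h1 : ν {p : ℝ × ℝ | p.1 ≤ 1 - x} = ν {p : ℝ × ℝ | x ≤ p.1} := by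
        conv_lhs => rw [← hSν]
        rw [Measure.map_apply measurable_refl2 (measurableSet_le measurable_fst measurable_const)]
        congr 1
        ext p
        simp only [Set.mem_preimage, Set.mem_setOf_eq, refl2]
        constructor <;> intro h <;> linarith
      have hsp : ν {p : ℝ × ℝ | p.1 ≤ x} = ν {p : ℝ × ℝ | p.1 < x} := by
        refine le_antisymm ?_
          (measure_mono fun p h => show p.1 ≤ x from le_of_lt (show p.1 < x from h))
        calc ν {p : ℝ × ℝ | p.1 ≤ x}
            ≤ ν ({p : ℝ × ℝ | p.1 < x} ∪ {p : ℝ × ℝ | p.1 = x}) :=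
              measure_mono (fun p h => show p.1 < x ∨ p.1 = x from lt_or_eq_of_le (show p.1 ≤ x from h))
          _ ≤ ν {p : ℝ × ℝ | p.1 < x} + ν {p : ℝ × ℝ | p.1 = x} := measure_union_le _ _
          _ = ν {p : ℝ × ℝ | p.1 < x} := by rw [hvert, add_zero]
      have h2 : ν {p : ℝ × ℝ | x ≤ p.1} = 1 - ν {p : ℝ × ℝ | p.1 ≤ x} := by
        have hc : {p : ℝ × ℝ | x ≤ p.1} = {p : ℝ × ℝ | p.1 < x}ᶜ := by
          ext p; simp [not_lt]
        rw [hc, prob_compl_eq_one_sub (measurableSet_lt measurable_fst measurable_const), hsp]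
      show (μ {ω' | X ω' ≤ 1 - x}).toReal = 1 - (μ {ω' | X ω' ≤ x}).toReal
      rw [hXle, hXle, h1, h2, ENNReal.toReal_sub_of_le prob_le_one ENNReal.one_ne_top]
      simp
    have hmeasFG : Measurable (fun p : ℝ × ℝ => F p.1 * G p.2) :=
      (hFmeas.comp measurable_fst).mul (hGmeas.comp measurable_snd)
    have hintFG : Integrable (fun p : ℝ × ℝ => F p.1 * G p.2) ν := by
      refine (integrable_const (1 : ℝ)).mono' hmeasFG.aestronglyMeasurable ?_
      refine Filter.Eventually.of_forall fun p => ?_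
      rw [Real.norm_eq_abs, abs_mul, abs_of_nonneg (hF0 _), abs_of_nonneg (hG0 _)]
      nlinarith [hF0 p.1, hF1 p.1, hG0 p.2, hG1 p.2]
    have hintF : Integrable (fun p : ℝ × ℝ => F p.1) ν := by
      refine (integrable_const (1 : ℝ)).mono'
        (hFmeas.comp measurable_fst).aestronglyMeasurable ?_
      refine Filter.Eventually.of_forall fun p => ?_
      rw [Real.norm_eq_abs, abs_of_nonneg (hF0 _)]
      exact hF1 _
    have hintG : Integrable (fun p : ℝ × ℝ => G p.2) ν := by
      refine (integrable_const (1 : ℝ)).mono'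
        (hGmeas.comp measurable_snd).aestronglyMeasurable ?_
      refine Filter.Eventually.of_forall fun p => ?_
      rw [Real.norm_eq_abs, abs_of_nonneg (hG0 _)]
      exact hG1 _
    have htrans : ∀ f : ℝ × ℝ → ℝ, Measurable f →
        ∫ ω, f (X ω, Y ω) ∂μ = ∫ p, f p ∂ν := by
      intro f hf
      rw [hν]
      exact (integral_map hZ.aemeasurable hf.aestronglyMeasurable).symm
    have hsymm_int : ∀ f : ℝ × ℝ → ℝ, Measurable f →
        ∫ p, f p ∂ν = ∫ p, f (refl2 p) ∂ν := by
      intro f hf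
      conv_lhs => rw [← hSν]
      exact integral_map measurable_refl2.aemeasurable
        (by rw [hSν]; exact hf.aestronglyMeasurable)
    have hIG : ∫ p : ℝ × ℝ, F p.1 * G p.2 ∂ν = (∫ p : ℝ × ℝ, G p.2 ∂ν) / 2 := by
      have h1 := hsymm_int _ hmeasFG
      have h2 : ∫ p : ℝ × ℝ, F (refl2 p).1 * G (refl2 p).2 ∂ν
          = ∫ p : ℝ × ℝ, (G p.2 - F p.1 * G p.2) ∂ν := by
        refine integral_congr_ae (Filter.Eventually.of_forall fun p => ?_)
        show F (1 - p.1) * G p.2 = G p.2 - F p.1 * G p.2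
        rw [hFsym]; ring
      rw [h2, integral_sub hintG hintFG] at h1
      linarith
    have hJF : ∫ p : ℝ × ℝ, F p.1 ∂ν = 1 / 2 := by
      have h1 := hsymm_int (fun p => F p.1) (hFmeas.comp measurable_fst)
      have h2 : ∫ p : ℝ × ℝ, F (refl2 p).1 ∂ν = ∫ p : ℝ × ℝ, (1 - F p.1) ∂ν := by
        refine integral_congr_ae (Filter.Eventually.of_forall fun p => ?_)
        show F (1 - p.1) = 1 - F p.1
        exact hFsym p.1
      rw [h2, integral_sub (integrable_const 1) hintF, integral_const] at h1
      simp only [measure_univ, ENNReal.toReal_one, smul_eq_mul, one_mul, probReal_univ, mul_one] at h1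
      linarith
    have hgoal1 : (fun ω => (μ {ω' | X ω' ≤ X ω}).toReal) = fun ω => F (X ω) := rfl
    have hgoal2 : (fun ω => (μ {ω' | Y ω' ≤ Y ω}).toReal) = fun ω => G (Y ω) := rfl
    rw [hgoal1, hgoal2]
    have e1 : ∫ ω, F (X ω) * G (Y ω) ∂μ = ∫ p : ℝ × ℝ, F p.1 * G p.2 ∂ν :=
      htrans _ hmeasFG
    have e2 : ∫ ω, F (X ω) ∂μ = ∫ p : ℝ × ℝ, F p.1 ∂ν :=
      htrans _ (hFmeas.comp measurable_fst)
    have e3 : ∫ ω, G (Y ω) ∂μ = ∫ p : ℝ × ℝ, G p.2 ∂ν :=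
      htrans _ (hGmeas.comp measurable_snd)
    unfold covar
    rw [e1, e2, e3, hIG, hJF]
    ring

end
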